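/- arXiv:1809.00008 — 2 statements merged into one kernel-verified Lean document; each statement's English description precedes it below -/
import Mathlib

section
/- Let p be a prime and k ≥ 2. Let P be the linear code over Z_p of length p^{k-1} generated by the k×p^{k-1} matrix whose first row is the all-ones vector and whose remaining (k-1)×p^{k-1} submatrix B has as columns all distinct vectors of Z_p^{k-1}. Then P has exactly p^k codewords and its nonzero codewords have Hamming weight either (p-1)p^{k-2} or p^{k-1}. -/
/-!
Write the columns of the generator matrix as `(1, b_j)`. The codeword with coefficients
`(c, u)` is `j ↦ c + u ⬝ᵥ b_j`, and since `j ↦ b_j` is a bijection onto `K^m`, its weight is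
the number of `w ∈ K^m` with `c + u ⬝ᵥ w ≠ 0`. For `u = 0` this is all `q^m` points (if `c ≠ 0`);
for `u ≠ 0` it is the complement of an affine hyperplane, `q^m - q^(m-1)` points. All these
weights are positive, so the generator matrix has trivial left kernel and the code has
`q^(m+1)` words.
-/

open Finset Matrix

section DotProduct

variable {K ι : Type*} [Field K] [Fintype K] [DecidableEq K] [Fintype ι] [DecidableEq ι]

lemma card_filter_dotProduct_eq {u : ι → K} (hu : u ≠ 0) (c : K) :
    #{w : ι → K | u ⬝ᵥ w = c} = Fintype.card K ^ (Fintype.card ι - 1) := by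
  obtain ⟨i, hi⟩ := Function.ne_iff.mp hu
  let f : (ι → K) →+ K := AddMonoidHom.mk' (u ⬝ᵥ ·) (dotProduct_add u)
  have hf : Function.Surjective f := fun d =>
    ⟨Pi.single i (d / u i), by simp [f, dotProduct_single, mul_div_cancel₀ _ hi]⟩
  have hfiber (d : K) : #{w | f w = d} = #{w | f w = c} :=
    AddMonoidHom.card_fiber_eq_of_mem_range f (hf d) (hf c)
  have hsum : Fintype.card K ^ Fintype.card ι = Fintype.card K * #{w | f w = c} := by
    calc Fintype.card K ^ Fintype.card ι = #(univ : Finset (ι → K)) := by simp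
      _ = ∑ d : K, #{w | f w = d} := card_eq_sum_card_fiberwise fun _ _ => mem_univ _
      _ = Fintype.card K * #{w | f w = c} := by simp [hfiber]
  rw [← mul_pow_sub_one (Fintype.card_pos_iff.mpr ⟨i⟩).ne'] at hsum
  exact (Nat.eq_of_mul_eq_mul_left Fintype.card_pos hsum).symm

lemma hammingNorm_const_add_dotProduct {u : ι → K} (hu : u ≠ 0) (c : K) :
    hammingNorm (fun w : ι → K => c + u ⬝ᵥ w) =
      (Fintype.card K - 1) * Fintype.card K ^ (Fintype.card ι - 1) := by
  obtain ⟨i, -⟩ := Function.ne_iff.mp hu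
  have hzeros : #{w : ι → K | ¬c + u ⬝ᵥ w ≠ 0} = Fintype.card K ^ (Fintype.card ι - 1) := by
    simp_rw [not_not, add_eq_zero_iff_eq_neg', card_filter_dotProduct_eq hu]
  have hsplit := card_filter_add_card_filter_not (s := univ) (fun w : ι → K => c + u ⬝ᵥ w ≠ 0)
  rw [hzeros, card_univ, Fintype.card_fun,
    ← mul_pow_sub_one (Fintype.card_pos_iff.mpr ⟨i⟩).ne'] at hsplit
  rw [hammingNorm, Nat.sub_one_mul, ← hsplit, Nat.add_sub_cancel]

end DotProduct

lemma hammingNorm_comp_of_bijective {α β γ : Type*} [Fintype α] [Fintype β] [Zero γ]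
    [DecidableEq γ] (g : β → γ) {F : α → β} (hF : Function.Bijective F) :
    hammingNorm (g ∘ F) = hammingNorm g := by
  simp only [hammingNorm, ← Fintype.card_subtype]
  exact Fintype.card_congr ((Equiv.ofBijective F hF).subtypeEquiv fun _ => Iff.rfl)

lemma vecMul_eq_comp_of_row_zero_eq_one {R n : Type*} [Semiring R] {m : ℕ}
    {A : Matrix (Fin (m + 1)) n R} (hA : ∀ j, A 0 j = 1) (v : Fin (m + 1) → R) :
    v ᵥ* A = (fun w => v 0 + Fin.tail v ⬝ᵥ w) ∘ fun j (i : Fin m) => A i.succ j := by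
  ext j
  simp [vecMul, dotProduct, Fin.sum_univ_succ, hA, Fin.tail]

section TwoWeightCode

variable {K n : Type*} [Field K] [Fintype K] [DecidableEq K] [Fintype n] {m : ℕ}
  {A : Matrix (Fin (m + 1)) n K}

lemma hammingNorm_vecMul_eq_or_eq (hA : ∀ j, A 0 j = 1)
    (hB : Function.Bijective fun j (i : Fin m) => A i.succ j) {v : Fin (m + 1) → K} (hv : v ≠ 0) :
    hammingNorm (v ᵥ* A) = (Fintype.card K - 1) * Fintype.card K ^ (m - 1) ∨
      hammingNorm (v ᵥ* A) = Fintype.card K ^ m := by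
  rw [vecMul_eq_comp_of_row_zero_eq_one hA, hammingNorm_comp_of_bijective _ hB]
  by_cases hu : Fin.tail v = 0
  · right
    have hv0 : v 0 ≠ 0 := fun h0 => hv <| by
      rw [← Fin.cons_self_tail v, h0, hu]; exact cons_zero_zero
    simp [hammingNorm, hu, hv0]
  · left
    simpa using hammingNorm_const_add_dotProduct hu (v 0)

lemma vecMul_injective_of_bijective (hA : ∀ j, A 0 j = 1)
    (hB : Function.Bijective fun j (i : Fin m) => A i.succ j) : Function.Injective (· ᵥ* A) := by
  refine (injective_iff_map_eq_zero (vecMulLinear A)).mpr fun v hv => ?_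
  by_contra hv0
  have hq : 0 < Fintype.card K - 1 := Nat.sub_pos_of_lt Fintype.one_lt_card
  have hweight := hammingNorm_vecMul_eq_or_eq hA hB hv0
  rw [← vecMulLinear_apply, hv, hammingNorm_zero] at hweight
  rcases hweight with h | h
  · exact (Nat.mul_pos hq (pow_pos Fintype.card_pos _)).ne h
  · exact (pow_pos Fintype.card_pos m).ne h

end TwoWeightCode

/-- the two-weight code `P` generated by the matrix `A` (all-ones row on top of a
matrix `B` whose columns enumerate all vectors of `(ZMod p)^(k-1)`) has exactly `p^k` codewords,
and every nonzero codeword has Hamming weight `(p-1)*p^(k-2)` or `p^(k-1)`. -/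
theorem stmt0 (p k : ℕ) (hp : p.Prime) (hk : 2 ≤ k)
    (A : Fin k → Fin (p ^ (k - 1)) → ZMod p)
    (hrow0 : ∀ j, A ⟨0, by omega⟩ j = 1)
    (hB : Function.Bijective
      (fun (j : Fin (p ^ (k - 1))) => fun (i : Fin (k - 1)) => A ⟨i.val + 1, by omega⟩ j))
    (P : Submodule (ZMod p) (Fin (p ^ (k - 1)) → ZMod p))
    (hP : P = Submodule.span (ZMod p) (Set.range A)) :
    Nat.card P = p ^ k ∧
      ∀ x ∈ P, x ≠ 0 →
        hammingNorm x = (p - 1) * p ^ (k - 2) ∨ hammingNorm x = p ^ (k - 1) := by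
  have : Fact p.Prime := ⟨hp⟩
  obtain ⟨m, rfl⟩ : ∃ m, k = m + 1 := ⟨k - 1, by omega⟩
  have hP' : P = LinearMap.range (vecMulLinear (A : Matrix _ _ (ZMod p))) :=
    hP.trans (range_vecMulLinear _).symm
  subst hP'
  constructor
  · have hinj := vecMul_injective_of_bijective hrow0 hB
    rw [← Nat.card_congr (LinearEquiv.ofInjective _ hinj).toEquiv]
    simp
  · rintro x ⟨v, rfl⟩ hx
    have hv : v ≠ 0 := by rintro rfl; exact hx (map_zero _)
    have hweight := hammingNorm_vecMul_eq_or_eq hrow0 hB hv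
    -- `m + 1 - 2` and `m + 1 - 1` reduce to `m - 1` and `m` definitionally
    rwa [ZMod.card] at hweight
end

section
/- Let C be a linear code over Z_p with minimum distance d, and let s be the number of distinct nonzero Hamming weights occurring in the dual code C^⊥. If 2s − 1 ≤ d ≤ 2s + 1, then the weight distribution of any coset of C is determined by the minimum weight of that coset. -/
/-!
With `q = |R|` and `ψ` a primitive additive character, the MacWilliams identity for cosets reads
`qⁿ · W_{x+C}(X) = |C| · Tₙ(∑_{v ∈ C^⊥} ψ(v ⬝ x) X^|v|)`, where `Tₙ F = (1 + (q-1)X)ⁿ F(φ X)` for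
the involution `φ X = (1 - X) / (1 + (q-1)X)`, which swaps `0` and `1`; so `Tₙ ∘ Tₙ = qⁿ`.

Two coset elements of weight `< s` are at distance `≤ 2s - 2 < d`, so a coset has at most one
element of weight `< s`, and two cosets with the same minimum weight have the same weight
distribution below `s`. Hence `X^s ∣ Tₙ G` for the difference `G` of the twisted dual enumerators
of `x` and `y`, and applying `Tₙ` again gives `(1 - X)^s ∣ G`. But `G` has no constant term and is supported on the `s`
nonzero dual weights, and a nonzero polynomial with at most `s` terms vanishes to order `< s`
at `1`. So `G = 0`, and the two coset weight enumerators coincide.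
-/

/-- The dual of a linear code `C ⊆ R^n` under the standard inner product. -/
def dualCode {R : Type*} [CommRing R] {n : ℕ} (C : Submodule R (Fin n → R)) :
    Submodule R (Fin n → R) where
  carrier := {x | ∀ c ∈ C, ∑ j, x j * c j = 0}
  add_mem' := by
    intro a b ha hb c hc
    simp only [Pi.add_apply, add_mul, Finset.sum_add_distrib, ha c hc, hb c hc, add_zero]
  zero_mem' := by intro c hc; simp
  smul_mem' := by
    intro r a ha c hc
    simp only [Pi.smul_apply, smul_eq_mul, mul_assoc, ← Finset.mul_sum, ha c hc, mul_zero]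

open Polynomial Finset

lemma AddChar.map_sum_eq_prod {ι A M : Type*} [AddCommMonoid A] [CommMonoid M]
    (ψ : AddChar A M) (s : Finset ι) (f : ι → A) : ψ (∑ i ∈ s, f i) = ∏ i ∈ s, ψ (f i) := by
  induction s using Finset.cons_induction with
  | empty => simp
  | cons a s ha ih => rw [sum_cons, prod_cons, AddChar.map_add_eq_mul, ih]

section HammingNorm

variable {ι : Type*} [Fintype ι] {β : ι → Type*} [∀ i, DecidableEq (β i)]

lemma pow_hammingNorm_eq_prod [∀ i, Zero (β i)] {M : Type*} [CommMonoid M] (z : M)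
    (u : ∀ i, β i) : z ^ hammingNorm u = ∏ i, if u i = 0 then 1 else z := by
  simp_rw [hammingNorm, ← prod_const, prod_filter, ne_eq, ite_not]

lemma hammingNorm_neg [∀ i, AddGroup (β i)] (v : ∀ i, β i) : hammingNorm (-v) = hammingNorm v :=
  hammingNorm_comp (fun _ => Neg.neg) (fun _ => neg_injective) (fun _ => neg_zero)

end HammingNorm

lemma Polynomial.eq_zero_of_one_sub_X_pow_dvd_of_card_support_le {R : Type*} [CommRing R]
    [IsDomain R] [CharZero R] {k : ℕ} {F : R[X]} (hdvd : (1 - X) ^ k ∣ F)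
    (hcard : #F.support ≤ k) : F = 0 := by
  induction k generalizing F with
  | zero => simpa using hcard
  | succ k ih =>
    by_contra hF
    obtain ⟨j, hj⟩ := support_nonempty.mpr hF
    -- `X F' - j F` kills the monomial of degree `j` and only rescales the others
    set F₁ := X * derivative F - C (j : R) * F
    have hcoeff (m : ℕ) : F₁.coeff m = ((m : R) - j) * F.coeff m := by
      cases m with
      | zero => simp [F₁]
      | succ m => simp [F₁, coeff_X_mul, coeff_derivative]; ring
    have hF₁ : F₁ = 0 := by
      refine ih (dvd_sub ?_ (((pow_dvd_pow _ k.le_succ).trans hdvd).mul_left _)) ?_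
      · exact (pow_sub_one_dvd_derivative_of_pow_dvd hdvd).mul_left _
      · have hsub : F₁.support ⊆ F.support.erase j := fun m hm => by
          rw [mem_support_iff, hcoeff] at hm
          exact mem_erase.mpr
            ⟨fun h => by simp [h] at hm, mem_support_iff.mpr (right_ne_zero_of_mul hm)⟩
        have := card_le_card hsub
        rw [card_erase_of_mem hj] at this
        omega
    have hsupp : F.support = {j} := by
      refine eq_singleton_iff_unique_mem.mpr ⟨hj, fun m hm => ?_⟩
      have := hcoeff m
      rw [hF₁, coeff_zero, eq_comm, mul_eq_zero, sub_eq_zero, Nat.cast_inj] at this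
      exact this.resolve_right (mem_support_iff.mp hm)
    have heval : F.eval 1 = 0 := by
      obtain ⟨G, rfl⟩ := hdvd
      simp
    rw [eval_eq_sum, sum_def, hsupp, sum_singleton, one_pow, mul_one] at heval
    exact mem_support_iff.mp hj heval

section MacWilliamsTransform

variable {K : Type*} [Field K] (q : K) (n : ℕ)

/-- `F ↦ (1 + (q-1)X)ⁿ F((1 - X) / (1 + (q-1)X))`, computed from the coefficients of `F` of
degree `≤ n`. -/
noncomputable def macWilliamsTransform : K[X] →ₗ[K] K[X] :=
  ∑ j ∈ range (n + 1), (lcoeff K j).smulRight ((1 - X) ^ j * (1 + C (q - 1) * X) ^ (n - j))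

variable {q n}

lemma macWilliamsTransform_apply (F : K[X]) :
    macWilliamsTransform q n F =
      ∑ j ∈ range (n + 1), C (F.coeff j) * ((1 - X) ^ j * (1 + C (q - 1) * X) ^ (n - j)) := by
  simp [macWilliamsTransform, smul_eq_C_mul]

lemma macWilliamsTransform_X_pow {j : ℕ} (hj : j ≤ n) :
    macWilliamsTransform q n (X ^ j) = (1 - X) ^ j * (1 + C (q - 1) * X) ^ (n - j) := by
  simp [macWilliamsTransform_apply, coeff_X_pow, hj]

lemma natDegree_macWilliamsTransform_le (F : K[X]) :
    (macWilliamsTransform q n F).natDegree ≤ n := by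
  rw [macWilliamsTransform_apply]
  refine natDegree_sum_le_of_forall_le _ _ fun j hj => ?_
  calc _ ≤ j + (n - j) := by compute_degree
    _ = n := Nat.add_sub_cancel' (Nat.lt_succ_iff.mp (mem_range.mp hj))

lemma eval_macWilliamsTransform {F : K[X]} (hF : F.natDegree ≤ n) {u : K}
    (hu : 1 + (q - 1) * u ≠ 0) :
    (macWilliamsTransform q n F).eval u =
      (1 + (q - 1) * u) ^ n * F.eval ((1 - u) / (1 + (q - 1) * u)) := by
  rw [macWilliamsTransform_apply, eval_eq_sum_range' (Nat.lt_succ_of_le hF), eval_finsetSum,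
    mul_sum]
  refine sum_congr rfl fun j hj => ?_
  rw [← Nat.add_sub_cancel' (Nat.lt_succ_iff.mp (mem_range.mp hj)), pow_add,
    Nat.add_sub_cancel_left]
  simp only [eval_mul, eval_pow, eval_C, eval_sub, eval_add, eval_one, eval_X]
  generalize 1 + (q - 1) * u = β at hu ⊢
  rw [div_pow]
  field_simp

lemma macWilliamsTransform_macWilliamsTransform [CharZero K] (hq : q ≠ 0) {F : K[X]}
    (hF : F.natDegree ≤ n) :
    macWilliamsTransform q n (macWilliamsTransform q n F) = C (q ^ n) * F := by
  have hB : (1 + C (q - 1) * X : K[X]) ≠ 0 := fun h => by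
    simpa using congr_arg (eval 0) h
  refine eq_of_infinite_eval_eq _ _ ((finite_setOfPred_isRoot hB).infinite_compl.mono ?_)
  intro u hu
  have hu : 1 + (q - 1) * u ≠ 0 := by simpa using hu
  -- `φ u = (1 - u) / (1 + (q - 1) u)` satisfies `φ (φ u) = u`, and the two denominators
  -- multiply to `q`
  have hv : 1 + (q - 1) * ((1 - u) / (1 + (q - 1) * u)) = q / (1 + (q - 1) * u) := by
    field_simp; ring
  have hv0 : 1 + (q - 1) * ((1 - u) / (1 + (q - 1) * u)) ≠ 0 := by
    rw [hv]; exact div_ne_zero hq hu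
  have hinv : (1 - (1 - u) / (1 + (q - 1) * u)) / (q / (1 + (q - 1) * u)) = u := by
    rw [show 1 - (1 - u) / (1 + (q - 1) * u) = q * u / (1 + (q - 1) * u) by
        rw [one_sub_div hu]; ring,
      div_div_div_cancel_right₀ hu, mul_div_cancel_left₀ _ hq]
  simp only [Set.mem_ofPred_eq]
  rw [eval_macWilliamsTransform (natDegree_macWilliamsTransform_le F) hu,
    eval_macWilliamsTransform hF hv0, hv, eval_mul, eval_C, hinv, ← mul_assoc, ← mul_pow,
    mul_div_cancel₀ _ hu]

lemma macWilliamsTransform_X_pow_mul {s : ℕ} (hs : s ≤ n) (G : K[X]) :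
    macWilliamsTransform q n (X ^ s * G) = (1 - X) ^ s * macWilliamsTransform q (n - s) G := by
  obtain ⟨m, rfl⟩ := exists_add_of_le hs
  rw [macWilliamsTransform_apply, macWilliamsTransform_apply, add_assoc, sum_range_add,
    sum_eq_zero fun j hj => by simp [coeff_X_pow_mul', not_le.mpr (mem_range.mp hj)],
    zero_add, Nat.add_sub_cancel_left, mul_sum]
  refine sum_congr rfl fun k _ => ?_
  rw [coeff_X_pow_mul', if_pos (Nat.le_add_right s k), Nat.add_sub_cancel_left,
    Nat.add_sub_add_left, pow_add]
  ring

lemma one_sub_X_pow_dvd_of_X_pow_dvd_macWilliamsTransform [CharZero K] (hq : q ≠ 0)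
    {F : K[X]} (hF : F.natDegree ≤ n) {s : ℕ} (h : X ^ s ∣ macWilliamsTransform q n F) :
    (1 - X) ^ s ∣ F := by
  have hunit : IsUnit (C (q ^ n)) := isUnit_C.mpr (pow_ne_zero n hq).isUnit
  rw [← hunit.dvd_mul_left, ← macWilliamsTransform_macWilliamsTransform hq hF]
  obtain ⟨G, hG⟩ := h
  by_cases hs : s ≤ n
  · rw [hG, macWilliamsTransform_X_pow_mul hs]
    exact dvd_mul_right _ _
  · have hG0 : macWilliamsTransform q n F = 0 :=
      eq_zero_of_dvd_of_natDegree_lt ⟨G, hG⟩ <| by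
        simpa using (natDegree_macWilliamsTransform_le F).trans_lt (not_le.mp hs)
    rw [hG0, map_zero]
    exact dvd_zero _

end MacWilliamsTransform

lemma mem_dualCode_iff {R : Type*} [CommRing R] {n : ℕ} {C : Submodule R (Fin n → R)}
    {v : Fin n → R} : v ∈ dualCode C ↔ ∀ c ∈ C, v ⬝ᵥ c = 0 := Iff.rfl

section CharacterSums

open scoped Classical

variable {R S : Type*} [CommRing R] [Fintype R] [CommRing S] [IsDomain S]
  {ψ : AddChar R S} {n : ℕ}

lemma sum_addChar_dotProduct_submodule (hψ : ψ.IsPrimitive) (C : Submodule R (Fin n → R))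
    (v : Fin n → R) :
    ∑ c : C, ψ (v ⬝ᵥ c) = if v ∈ dualCode C then (Nat.card C : S) else 0 := by
  split_ifs with hv
  · simp [fun c : C => mem_dualCode_iff.mp hv c c.2, Nat.card_eq_fintype_card]
  · obtain ⟨c, hc, hvc⟩ : ∃ c ∈ C, v ⬝ᵥ c ≠ 0 := by simpa [mem_dualCode_iff] using hv
    obtain ⟨a, ha⟩ := AddChar.ne_one_iff.mp (hψ hvc)
    let χ : AddChar C S := ψ.compAddMonoidHom
      (AddMonoidHom.mk' (fun c : C => v ⬝ᵥ (c : Fin n → R)) fun _ _ => dotProduct_add _ _ _)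
    refine AddChar.sum_eq_zero_of_ne_one (ψ := χ)
      (AddChar.ne_one_iff.mpr ⟨⟨a • c, C.smul_mem a hc⟩, ?_⟩)
    simpa [χ, mul_comm] using ha

variable [DecidableEq R]

lemma sum_addChar_dotProduct (hψ : ψ.IsPrimitive) (w : Fin n → R) :
    ∑ v : Fin n → R, ψ (v ⬝ᵥ w) = if w = 0 then (Fintype.card R : S) ^ n else 0 := by
  simp_rw [dotProduct, AddChar.map_sum_eq_prod]
  rw [← Fintype.prod_sum fun j a => ψ (a * w j)]
  simp_rw [AddChar.sum_mulShift _ hψ, Nat.cast_ite, Nat.cast_zero]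
  rw [Fintype.prod_ite_zero]
  simp [funext_iff]

lemma sum_ite_mul_addChar (hψ : ψ.IsPrimitive) (z : S) (b : R) :
    ∑ a : R, (if a = 0 then 1 else z) * ψ (a * b) =
      if b = 0 then 1 + ((Fintype.card R : S) - 1) * z else 1 - z := by
  have hsplit (a : R) : (if a = 0 then 1 else z) = z + if a = 0 then 1 - z else 0 := by
    split_ifs <;> ring
  simp_rw [hsplit, add_mul, sum_add_distrib, ← mul_sum, ite_mul, zero_mul, sum_ite_eq',
    mem_univ, if_true, zero_mul, AddChar.map_zero_eq_one, AddChar.sum_mulShift _ hψ]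
  split_ifs <;> ring

lemma sum_pow_hammingNorm_mul_addChar (hψ : ψ.IsPrimitive) (z : S) (v : Fin n → R) :
    ∑ u : Fin n → R, z ^ hammingNorm u * ψ (v ⬝ᵥ u) =
      (1 - z) ^ hammingNorm v * (1 + ((Fintype.card R : S) - 1) * z) ^ (n - hammingNorm v) := by
  simp_rw [pow_hammingNorm_eq_prod z, dotProduct, AddChar.map_sum_eq_prod, ← prod_mul_distrib]
  rw [← Fintype.prod_sum fun j a => (if a = 0 then 1 else z) * ψ (v j * a)]
  simp_rw [mul_comm (v _), sum_ite_mul_addChar hψ, prod_ite, prod_const]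
  have hzeros : #{j | v j = 0} = n - hammingNorm v := by
    have := card_filter_add_card_filter_not (s := univ) (fun j => v j = 0)
    rw [card_univ, Fintype.card_fin] at this
    simp only [hammingNorm, ne_eq] at this ⊢
    omega
  rw [mul_comm, hzeros]
  rfl

theorem card_pow_mul_sum_pow_hammingNorm_coset (hψ : ψ.IsPrimitive)
    (C : Submodule R (Fin n → R)) (x : Fin n → R) (z : S) :
    (Fintype.card R : S) ^ n * ∑ c : C, z ^ hammingNorm (x + (c : Fin n → R)) =
      Nat.card C * ∑ v : dualCode C, ψ (v ⬝ᵥ x) * ((1 - z) ^ hammingNorm (v : Fin n → R) *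
        (1 + ((Fintype.card R : S) - 1) * z) ^ (n - hammingNorm (v : Fin n → R))) := by
  have hexpand (v : Fin n → R) (c : C) (u : Fin n → R) :
      ψ (v ⬝ᵥ (x + c - u)) = ψ (v ⬝ᵥ x) * ψ (v ⬝ᵥ c) * ψ ((-v) ⬝ᵥ u) := by
    rw [← AddChar.map_add_eq_mul, ← AddChar.map_add_eq_mul, dotProduct_sub, dotProduct_add,
      neg_dotProduct, sub_eq_add_neg]
  calc (Fintype.card R : S) ^ n * ∑ c : C, z ^ hammingNorm (x + (c : Fin n → R))
      = ∑ c : C, ∑ u, z ^ hammingNorm u * ∑ v, ψ (v ⬝ᵥ (x + (c : Fin n → R) - u)) := by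
        simp_rw [sum_addChar_dotProduct hψ, sub_eq_zero, mul_ite, mul_zero, sum_ite_eq,
          mem_univ, if_true, mul_sum, mul_comm]
    _ = ∑ v, ∑ u, ∑ c : C, z ^ hammingNorm u * ψ (v ⬝ᵥ (x + (c : Fin n → R) - u)) := by
        simp_rw [mul_sum]
        rw [sum_comm]
        exact (sum_congr rfl fun u _ => sum_comm).trans sum_comm
    _ = ∑ v, ψ (v ⬝ᵥ x) * (∑ c : C, ψ (v ⬝ᵥ c)) *
          ∑ u, z ^ hammingNorm u * ψ ((-v) ⬝ᵥ u) := by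
        simp only [sum_mul, mul_sum, hexpand]
        exact sum_congr rfl fun v _ => sum_congr rfl fun u _ => sum_congr rfl fun c _ => by ring
    _ = _ := by
        simp_rw [sum_addChar_dotProduct_submodule hψ, sum_pow_hammingNorm_mul_addChar hψ,
          hammingNorm_neg, mul_ite, ite_mul, mul_zero, zero_mul]
        rw [← sum_filter, sum_subtype (p := (· ∈ dualCode C)) _ (fun v => by simp), mul_sum]
        exact sum_congr rfl fun v _ => by ring

end CharacterSums

section CosetWeightDistribution

variable {R : Type*} [CommRing R] [DecidableEq R] {n : ℕ}

noncomputable def cosetMinWeight (C : Submodule R (Fin n → R)) (x : Fin n → R) : ℕ :=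
  sInf {w : ℕ | ∃ c ∈ C, hammingNorm (x + c) = w}

lemma eq_of_hammingNorm_add_add_lt {C : Submodule R (Fin n → R)} {d : ℕ}
    (hd : ∀ c ∈ C, c ≠ 0 → d ≤ hammingNorm c) {x c c' : Fin n → R} (hc : c ∈ C) (hc' : c' ∈ C)
    (h : hammingNorm (x + c) + hammingNorm (x + c') < d) : c = c' := by
  by_contra hne
  have hdist : hammingNorm (c - c') ≤ hammingNorm (x + c) + hammingNorm (x + c') := by
    rw [show c - c' = -(x + c') + (x + c) by abel, ← hammingDist_eq_hammingNorm]
    calc _ ≤ hammingDist (x + c') 0 + hammingDist 0 (x + c) := hammingDist_triangle _ _ _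
      _ = _ := by rw [hammingDist_zero_right, hammingDist_zero_left, add_comm]
  have := hd _ (C.sub_mem hc hc') (sub_ne_zero.mpr hne)
  omega

variable [Fintype R]

open scoped Classical

noncomputable def cosetWeightEnumerator (C : Submodule R (Fin n → R)) (x : Fin n → R) : ℂ[X] :=
  ∑ c : C, X ^ hammingNorm (x + (c : Fin n → R))

noncomputable def twistedDualWeightEnumerator (ψ : AddChar R ℂ) (C : Submodule R (Fin n → R))
    (x : Fin n → R) : ℂ[X] :=
  ∑ v : dualCode C, ψ (v ⬝ᵥ x) • X ^ hammingNorm (v : Fin n → R)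

lemma coeff_cosetWeightEnumerator (C : Submodule R (Fin n → R)) (x : Fin n → R) (w : ℕ) :
    (cosetWeightEnumerator C x).coeff w = #{c : C | hammingNorm (x + (c : Fin n → R)) = w} := by
  simp [cosetWeightEnumerator, coeff_X_pow, eq_comm]

lemma card_coset_hammingNorm_eq (C : Submodule R (Fin n → R)) (x : Fin n → R) (w : ℕ) :
    Nat.card {u : Fin n → R | (∃ c ∈ C, u = x + c) ∧ hammingNorm u = w} =
      #{c : C | hammingNorm (x + (c : Fin n → R)) = w} := by
  have himage : {u : Fin n → R | (∃ c ∈ C, u = x + c) ∧ hammingNorm u = w} =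
      (fun c : C => x + (c : Fin n → R)) '' {c | hammingNorm (x + (c : Fin n → R)) = w} := by
    ext u
    constructor
    · rintro ⟨⟨c, hc, rfl⟩, hw⟩
      exact ⟨⟨c, hc⟩, hw, rfl⟩
    · rintro ⟨c, hw, rfl⟩
      exact ⟨⟨c, c.2, rfl⟩, hw⟩
  rw [himage, Nat.card_image_of_injective fun a b h => Subtype.ext (add_left_cancel h),
    Nat.card_eq_fintype_card]
  simp only [Set.coe_ofPred, Fintype.card_subtype]

lemma card_filter_hammingNorm_coset_eq_ite {C : Submodule R (Fin n → R)} {d : ℕ}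
    (hd : ∀ c ∈ C, c ≠ 0 → d ≤ hammingNorm c) (x : Fin n → R) {i : ℕ} (hi : 2 * i < d) :
    #{c : C | hammingNorm (x + (c : Fin n → R)) = i} =
      if i = cosetMinWeight C x then 1 else 0 := by
  obtain ⟨c₀, hc₀, hmin⟩ : ∃ c ∈ C, hammingNorm (x + c) = cosetMinWeight C x :=
    Nat.sInf_mem (s := {w | ∃ c ∈ C, hammingNorm (x + c) = w}) ⟨_, 0, C.zero_mem, rfl⟩
  have huniq (c : C) (hc : hammingNorm (x + (c : Fin n → R)) = i) : (c : Fin n → R) = c₀ := by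
    have : cosetMinWeight C x ≤ hammingNorm (x + (c : Fin n → R)) := Nat.sInf_le ⟨c, c.2, rfl⟩
    exact eq_of_hammingNorm_add_add_lt hd (x := x) c.2 hc₀ (by omega)
  split_ifs with him
  · refine card_eq_one.mpr ⟨⟨c₀, hc₀⟩, eq_singleton_iff_unique_mem.mpr ⟨?_, fun c hc => ?_⟩⟩
    · simp [hmin, him]
    · exact Subtype.ext (huniq c (mem_filter.mp hc).2)
  · refine card_eq_zero.mpr (filter_eq_empty_iff.mpr fun c _ hc => him ?_)
    rw [← hc, huniq c hc, hmin]

lemma natDegree_twistedDualWeightEnumerator_le (ψ : AddChar R ℂ) (C : Submodule R (Fin n → R))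
    (x : Fin n → R) : (twistedDualWeightEnumerator ψ C x).natDegree ≤ n := by
  refine natDegree_sum_le_of_forall_le _ _ fun v _ => (natDegree_smul_le _ _).trans ?_
  simpa using hammingNorm_le_card_fintype (x := (v : Fin n → R))

lemma support_twistedDualWeightEnumerator_sub_subset (ψ : AddChar R ℂ)
    (C : Submodule R (Fin n → R)) (x y : Fin n → R) :
    ((twistedDualWeightEnumerator ψ C x - twistedDualWeightEnumerator ψ C y).support : Set ℕ) ⊆
      {w | w ≠ 0 ∧ ∃ v ∈ dualCode C, hammingNorm v = w} := by
  intro w hw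
  by_contra hw'
  refine mem_support_iff.mp hw ?_
  rw [coeff_sub, twistedDualWeightEnumerator, twistedDualWeightEnumerator, finsetSum_coeff,
    finsetSum_coeff, ← sum_sub_distrib]
  refine sum_eq_zero fun v _ => ?_
  rw [coeff_smul, coeff_smul, coeff_X_pow, ← sub_smul]
  split_ifs with hvw
  · have hv : (v : Fin n → R) = 0 :=
      hammingNorm_eq_zero.mp (by_contra fun h => hw' ⟨hvw ▸ h, v, v.2, hvw.symm⟩)
    simp [hv]
  · simp

theorem cosetWeightEnumerator_macWilliams {ψ : AddChar R ℂ} (hψ : ψ.IsPrimitive)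
    (C : Submodule R (Fin n → R)) (x : Fin n → R) :
    Polynomial.C ((Fintype.card R : ℂ) ^ n) * cosetWeightEnumerator C x =
      Polynomial.C (Nat.card C : ℂ) *
        macWilliamsTransform (Fintype.card R : ℂ) n (twistedDualWeightEnumerator ψ C x) := by
  have hψC := hψ.compMulHom_of_isPrimitive (f := (Polynomial.C : ℂ →+* ℂ[X]).toMonoidHom)
    C_injective
  rw [cosetWeightEnumerator, map_pow, map_natCast, map_natCast,
    card_pow_mul_sum_pow_hammingNorm_coset hψC, twistedDualWeightEnumerator, map_sum]
  congr 1
  refine sum_congr rfl fun v _ => ?_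
  rw [map_smul, macWilliamsTransform_X_pow
    (by simpa using hammingNorm_le_card_fintype (x := (v : Fin n → R))), smul_eq_C_mul]
  simp

theorem cosetWeightEnumerator_eq_of_cosetMinWeight_eq {ψ : AddChar R ℂ} (hψ : ψ.IsPrimitive)
    {C : Submodule R (Fin n → R)} {d s : ℕ} (hd : ∀ c ∈ C, c ≠ 0 → d ≤ hammingNorm c)
    (hs : {w : ℕ | w ≠ 0 ∧ ∃ v ∈ dualCode C, hammingNorm v = w}.ncard ≤ s)
    (hsd : 2 * s ≤ d + 1) {x y : Fin n → R} (hxy : cosetMinWeight C x = cosetMinWeight C y) :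
    cosetWeightEnumerator C x = cosetWeightEnumerator C y := by
  set G := twistedDualWeightEnumerator ψ C x - twistedDualWeightEnumerator ψ C y
  have hTG : Polynomial.C (Nat.card C : ℂ) * macWilliamsTransform (Fintype.card R : ℂ) n G =
      Polynomial.C ((Fintype.card R : ℂ) ^ n) *
        (cosetWeightEnumerator C x - cosetWeightEnumerator C y) := by
    rw [map_sub, mul_sub, mul_sub, cosetWeightEnumerator_macWilliams hψ,
      cosetWeightEnumerator_macWilliams hψ]
  have hlow : X ^ s ∣ cosetWeightEnumerator C x - cosetWeightEnumerator C y := by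
    refine X_pow_dvd_iff.mpr fun i hi => ?_
    rw [coeff_sub, coeff_cosetWeightEnumerator, coeff_cosetWeightEnumerator,
      card_filter_hammingNorm_coset_eq_ite hd x (by omega),
      card_filter_hammingNorm_coset_eq_ite hd y (by omega), hxy, sub_self]
  have hG : (1 - X) ^ s ∣ G := by
    have hCunit : IsUnit (Polynomial.C (Nat.card C : ℂ)) :=
      isUnit_C.mpr (Nat.cast_ne_zero.mpr Nat.card_pos.ne').isUnit
    refine one_sub_X_pow_dvd_of_X_pow_dvd_macWilliamsTransform
      (Nat.cast_ne_zero.mpr (Fintype.card_ne_zero (α := R)))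
      ((natDegree_sub_le _ _).trans (max_le (natDegree_twistedDualWeightEnumerator_le ψ C x)
        (natDegree_twistedDualWeightEnumerator_le ψ C y))) ?_
    rw [← hCunit.dvd_mul_left, hTG]
    exact hlow.mul_left _
  have hsupp : #G.support ≤ s := by
    have hfin : {w : ℕ | w ≠ 0 ∧ ∃ v ∈ dualCode C, hammingNorm v = w}.Finite :=
      (Set.finite_Iic n).subset fun w ⟨_, v, _, hv⟩ =>
        hv ▸ hammingNorm_le_card_fintype.trans_eq (Fintype.card_fin n)
    rw [← Set.ncard_coe_finset]
    exact (Set.ncard_le_ncard (support_twistedDualWeightEnumerator_sub_subset ψ C x y)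
      hfin).trans hs
  rw [eq_zero_of_one_sub_X_pow_dvd_of_card_support_le hG hsupp, map_zero, mul_zero,
    eq_comm, mul_eq_zero, sub_eq_zero] at hTG
  exact hTG.resolve_left (by simp)

end CosetWeightDistribution

theorem stmt4_general (p n : ℕ) (hp : p.Prime)
    (C : Submodule (ZMod p) (Fin n → ZMod p))
    (d s : ℕ)
    (hd : d = sInf {w : ℕ | ∃ c ∈ C, c ≠ 0 ∧ hammingNorm c = w})
    (hs : s = Nat.card {w : ℕ | w ≠ 0 ∧ ∃ c ∈ dualCode C, hammingNorm c = w})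
    (h1 : 2 * s - 1 ≤ d)
    (x y : Fin n → ZMod p)
    (hmin : sInf {w : ℕ | ∃ c ∈ C, hammingNorm (x + c) = w}
          = sInf {w : ℕ | ∃ c ∈ C, hammingNorm (y + c) = w}) :
    ∀ w : ℕ, Nat.card {u : Fin n → ZMod p | (∃ c ∈ C, u = x + c) ∧ hammingNorm u = w}
           = Nat.card {u : Fin n → ZMod p | (∃ c ∈ C, u = y + c) ∧ hammingNorm u = w} := by
  have : NeZero p := ⟨hp.ne_zero⟩
  have hd' : ∀ c ∈ C, c ≠ 0 → d ≤ hammingNorm c := fun c hc hc0 =>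
    hd ▸ Nat.sInf_le ⟨c, hc, hc0, rfl⟩
  have hxy := cosetWeightEnumerator_eq_of_cosetMinWeight_eq (ZMod.isPrimitive_stdAddChar p) hd'
    hs.ge (by omega) hmin
  intro w
  rw [card_coset_hammingNorm_eq, card_coset_hammingNorm_eq, ← Nat.cast_inj (R := ℂ),
    ← coeff_cosetWeightEnumerator, ← coeff_cosetWeightEnumerator, hxy]

/-- Delsarte: if `C` is a linear code over `Z_p` of minimum distance `d` and the
dual of `C` has `s` distinct nonzero weights with `2s-1 ≤ d ≤ 2s+1`, then the weight distribution
of a coset of `C` is determined by the minimum weight of the coset. -/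
theorem stmt4 (p n : ℕ) (hp : p.Prime)
    (C : Submodule (ZMod p) (Fin n → ZMod p))
    (d s : ℕ)
    (hd : d = sInf {w : ℕ | ∃ c ∈ C, c ≠ 0 ∧ hammingNorm c = w})
    (hs : s = Nat.card {w : ℕ | w ≠ 0 ∧ ∃ c ∈ dualCode C, hammingNorm c = w})
    (h1 : 2 * s - 1 ≤ d) (h2 : d ≤ 2 * s + 1)
    (x y : Fin n → ZMod p)
    (hmin : sInf {w : ℕ | ∃ c ∈ C, hammingNorm (x + c) = w}
          = sInf {w : ℕ | ∃ c ∈ C, hammingNorm (y + c) = w}) :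
    ∀ w : ℕ, Nat.card {u : Fin n → ZMod p | (∃ c ∈ C, u = x + c) ∧ hammingNorm u = w}
           = Nat.card {u : Fin n → ZMod p | (∃ c ∈ C, u = y + c) ∧ hammingNorm u = w} :=
  stmt4_general p n hp C d s hd hs h1 x y hmin
end
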